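/- Let Ω ⊆ ℝⁿ be open, q ≤ p in [1,∞], and v₁, v₂ : (0,∞) → [0,∞) with v₁v₂ not identically zero. Suppose there exists c ≥ 0 with v₂(r) r^{n/q} ≤ c v₁(r) r^{n/p} for all r > 0. Then M_p^{v₁}(Ω) is continuously embedded into M_q^{v₂}(Ω), with ‖f‖_{M_q^{v₂}(Ω)} ≤ ω_n^{1/q - 1/p} c ‖f‖_{M_p^{v₁}(Ω)}, where ω_n is the Lebesgue measure of the unit ball. -/

import Mathlib

open MeasureTheory Metric Set Filter ENNReal

/-- The (generalized) Morrey quantity `|f|_{ρ,w,p,Ω}`: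
`sup_{(x,r) ∈ Ω × (0,ρ)} w(r) ‖f‖_{L^p(B(x,r) ∩ Ω)}`, valued in `ℝ≥0∞`. -/
noncomputable def morreyNorm {n : ℕ} (Ω : Set (EuclideanSpace ℝ (Fin n)))
    (p : ℝ≥0∞) (w : ℝ → ℝ) (ρ : ℝ≥0∞) (f : EuclideanSpace ℝ (Fin n) → ℝ) : ℝ≥0∞ :=
  ⨆ x ∈ Ω, ⨆ r ∈ {r : ℝ | 0 < r ∧ ENNReal.ofReal r < ρ},
    ENNReal.ofReal (w r) * eLpNorm f p (volume.restrict (ball x r ∩ Ω))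

/-! Hölder's inequality on each ball `B(x, r) ∩ Ω`, whose measure is at most `ω_n rⁿ`,
trades the `L^p` norm for the `L^q` norm at the cost of the factor `(ω_n rⁿ)^{1/q - 1/p}`;
the hypothesis on the weights absorbs `r^{n(1/q - 1/p)}` into `c v₁(r)`. -/

section Morrey

variable {n : ℕ} {Ω : Set (EuclideanSpace ℝ (Fin n))} {p : ℝ≥0∞} {w : ℝ → ℝ}
  {ρ : ℝ≥0∞} {f : EuclideanSpace ℝ (Fin n) → ℝ}

theorem le_morreyNorm {x : EuclideanSpace ℝ (Fin n)} (hx : x ∈ Ω) {r : ℝ} (hr : 0 < r)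
    (hrρ : ENNReal.ofReal r < ρ) :
    ENNReal.ofReal (w r) * eLpNorm f p (volume.restrict (ball x r ∩ Ω)) ≤
      morreyNorm Ω p w ρ f :=
  le_iSup₂_of_le x hx <| le_iSup₂_of_le (f := fun r _ => ENNReal.ofReal (w r) *
    eLpNorm f p (volume.restrict (ball x r ∩ Ω))) r ⟨hr, hrρ⟩ le_rfl

theorem morreyNorm_le {C : ℝ≥0∞}
    (h : ∀ x ∈ Ω, ∀ r, 0 < r → ENNReal.ofReal r < ρ →
      ENNReal.ofReal (w r) * eLpNorm f p (volume.restrict (ball x r ∩ Ω)) ≤ C) :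
    morreyNorm Ω p w ρ f ≤ C :=
  iSup₂_le fun x hx => iSup₂_le fun r hr => h x hx r hr.1 hr.2

end Morrey

theorem one_div_toReal_sub_one_div_toReal_nonneg {p q : ℝ≥0∞} (hq : q ≠ 0) (hqp : q ≤ p) :
    0 ≤ 1 / q.toReal - 1 / p.toReal := by
  rw [sub_nonneg, one_div, one_div, ← toReal_inv, ← toReal_inv]
  exact toReal_mono (inv_ne_top.mpr hq) (ENNReal.inv_le_inv.mpr hqp)

theorem Real.mul_rpow_le_of_mul_rpow_add_le {r a b s t : ℝ} (hr : 0 < r)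
    (h : a * r ^ (s + t) ≤ b * r ^ t) : a * r ^ s ≤ b := by
  rw [Real.rpow_add hr, ← mul_assoc] at h
  exact le_of_mul_le_mul_right h (Real.rpow_pos_of_pos hr t)

section Holder

variable {E : Type*} [NormedAddCommGroup E] [NormedSpace ℝ E] [MeasurableSpace E] [BorelSpace E]
  [FiniteDimensional ℝ E] (μ : Measure E) [μ.IsAddHaarMeasure]

theorem measure_ball_inter_le (x : E) {r : ℝ} (hr : 0 < r) (s : Set E) :
    μ (ball x r ∩ s) ≤ ENNReal.ofReal (r ^ Module.finrank ℝ E) * μ (ball 0 1) :=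
  (measure_mono inter_subset_left).trans (Measure.addHaar_ball_of_pos μ x hr).le

theorem eLpNorm_restrict_ball_inter_le {F : Type*} [NormedAddCommGroup F] {f : E → F}
    (hf : AEStronglyMeasurable f μ) {p q : ℝ≥0∞} (hq : q ≠ 0) (hqp : q ≤ p)
    (x : E) {r : ℝ} (hr : 0 < r) (s : Set E) :
    eLpNorm f q (μ.restrict (ball x r ∩ s)) ≤
      μ (ball 0 1) ^ (1 / q.toReal - 1 / p.toReal) *
        ENNReal.ofReal (r ^ (Module.finrank ℝ E * (1 / q.toReal - 1 / p.toReal))) *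
          eLpNorm f p (μ.restrict (ball x r ∩ s)) := by
  set e := 1 / q.toReal - 1 / p.toReal
  have he : 0 ≤ e := one_div_toReal_sub_one_div_toReal_nonneg hq hqp
  have hvol : μ.restrict (ball x r ∩ s) univ ^ e ≤
      μ (ball 0 1) ^ e * ENNReal.ofReal (r ^ (Module.finrank ℝ E * e)) := by
    calc μ.restrict (ball x r ∩ s) univ ^ e
        ≤ (ENNReal.ofReal (r ^ Module.finrank ℝ E) * μ (ball 0 1)) ^ e := by
          rw [Measure.restrict_apply_univ]
          exact rpow_le_rpow (measure_ball_inter_le μ x hr s) he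
      _ = μ (ball 0 1) ^ e * ENNReal.ofReal (r ^ (Module.finrank ℝ E * e)) := by
          rw [mul_rpow_of_nonneg _ _ he, ofReal_rpow_of_pos (pow_pos hr _),
            Real.rpow_natCast_mul hr.le, mul_comm]
  calc eLpNorm f q (μ.restrict (ball x r ∩ s))
      ≤ eLpNorm f p (μ.restrict (ball x r ∩ s)) * μ.restrict (ball x r ∩ s) univ ^ e :=
        eLpNorm_le_eLpNorm_mul_rpow_measure_univ hqp hf.restrict
    _ ≤ eLpNorm f p (μ.restrict (ball x r ∩ s)) *
          (μ (ball 0 1) ^ e * ENNReal.ofReal (r ^ (Module.finrank ℝ E * e))) := by gcongr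
    _ = _ := mul_comm _ _

end Holder

theorem stmt18_general (n : ℕ) (Ω : Set (EuclideanSpace ℝ (Fin n)))
    (p q : ℝ≥0∞) (hq : 1 ≤ q) (hqp : q ≤ p)
    (v₁ v₂ : ℝ → ℝ)
    (c : ℝ) (hc : 0 ≤ c)
    (hineq : ∀ r > (0:ℝ),
      v₂ r * r ^ ((n : ℝ) / q.toReal) ≤ c * (v₁ r * r ^ ((n : ℝ) / p.toReal))) :
    ∀ f : EuclideanSpace ℝ (Fin n) → ℝ, Measurable f →
      morreyNorm Ω p v₁ ⊤ f < ⊤ →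
      morreyNorm Ω q v₂ ⊤ f ≤
        (volume (ball (0 : EuclideanSpace ℝ (Fin n)) 1)) ^ (1 / q.toReal - 1 / p.toReal) *
          ENNReal.ofReal c * morreyNorm Ω p v₁ ⊤ f := by
  intro f hf _
  set e := 1 / q.toReal - 1 / p.toReal
  refine morreyNorm_le fun x hx r hr _ => ?_
  have hweight : v₂ r * r ^ ((n : ℝ) * e) ≤ c * v₁ r := by
    refine Real.mul_rpow_le_of_mul_rpow_add_le (t := n / p.toReal) hr ?_
    rw [show (n : ℝ) * e + n / p.toReal = n / q.toReal by ring, mul_assoc]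
    exact hineq r hr
  have hHolder := eLpNorm_restrict_ball_inter_le volume hf.aestronglyMeasurable
    (one_pos.trans_le hq).ne' hqp x hr Ω
  rw [finrank_euclideanSpace_fin] at hHolder
  set ω := volume (ball (0 : EuclideanSpace ℝ (Fin n)) 1)
  set μ := volume.restrict (ball x r ∩ Ω)
  calc ENNReal.ofReal (v₂ r) * eLpNorm f q μ
      ≤ ENNReal.ofReal (v₂ r) *
          (ω ^ e * ENNReal.ofReal (r ^ ((n : ℝ) * e)) * eLpNorm f p μ) := by gcongr
    _ = ω ^ e * ENNReal.ofReal (v₂ r * r ^ ((n : ℝ) * e)) * eLpNorm f p μ := by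
        rw [ofReal_mul' (by positivity)]; ring
    _ ≤ ω ^ e * ENNReal.ofReal (c * v₁ r) * eLpNorm f p μ := by gcongr
    _ = ω ^ e * ENNReal.ofReal c * (ENNReal.ofReal (v₁ r) * eLpNorm f p μ) := by
        rw [ofReal_mul hc]; ring
    _ ≤ ω ^ e * ENNReal.ofReal c * morreyNorm Ω p v₁ ⊤ f := by
        gcongr; exact le_morreyNorm hx hr ofReal_lt_top

/-- Embedding theorem for generalized Morrey spaces: if
`v₂(r) r^{n/q} ≤ c v₁(r) r^{n/p}` for all `r > 0` and `q ≤ p`, then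
`M_p^{v₁}(Ω)` embeds into `M_q^{v₂}(Ω)` with constant `ω_n^{1/q-1/p} c`. -/
theorem stmt18 (n : ℕ) (Ω : Set (EuclideanSpace ℝ (Fin n))) (hΩ : IsOpen Ω)
    (p q : ℝ≥0∞) (hq : 1 ≤ q) (hqp : q ≤ p)
    (v₁ v₂ : ℝ → ℝ) (hv₁ : ∀ r > (0:ℝ), 0 ≤ v₁ r) (hv₂ : ∀ r > (0:ℝ), 0 ≤ v₂ r)
    (hv0 : ∃ r₀ > (0:ℝ), v₁ r₀ * v₂ r₀ ≠ 0)
    (c : ℝ) (hc : 0 ≤ c)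
    (hineq : ∀ r > (0:ℝ),
      v₂ r * r ^ ((n : ℝ) / q.toReal) ≤ c * (v₁ r * r ^ ((n : ℝ) / p.toReal))) :
    ∀ f : EuclideanSpace ℝ (Fin n) → ℝ, Measurable f →
      morreyNorm Ω p v₁ ⊤ f < ⊤ →
      morreyNorm Ω q v₂ ⊤ f ≤
        (volume (ball (0 : EuclideanSpace ℝ (Fin n)) 1)) ^ (1 / q.toReal - 1 / p.toReal) *
          ENNReal.ofReal c * morreyNorm Ω p v₁ ⊤ f :=
  stmt18_general n Ω p q hq hqp v₁ v₂ c hc hineq
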